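/- arXiv:quant-ph/0001091 — 3 statements merged into one kernel-verified Lean document; each statement's English description precedes it below -/
import Mathlib

section
/- For p, q real with p² + q² = 1, p, q > 0, and p ≠ q, the set of triples (φ, X, Y) with φ ∈ ℝ, X, Y ∈ SU(2) satisfying diag(p,q) = e^{iφ} X diag(p,q) Yᵀ is exactly the set { (nπ, e^{iνσ₃}, conj(e^{iνσ₃})) : ν ∈ ℝ, n ∈ ℤ } up to absorbing the sign ±1 into X; in particular every solution has X diagonal and Y = conj(X) up to sign. -/
/-!
Write `D = diag(p,q)` and `c = e^{iφ}`. Taking determinants in `D = c X D Yᵀ` gives `c² = 1`,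
i.e. `φ ∈ πℤ`, and then `U = cX` again lies in `SU(2)` with `U D Yᵀ = D`. As `U` and `Yᵀ` are
unitary, `U` commutes with `D D* = diag(p², q²)`, whose entries are distinct, so `U` is
diagonal, hence of the form `e^{iνσ₃}`. Then `U` commutes with the invertible `D`, and
`U D Yᵀ = D` forces `Yᵀ = U*`, i.e. `Y = conj U`.
-/

open Matrix

noncomputable def diagExpSigma3 (ν : ℝ) : Matrix (Fin 2) (Fin 2) ℂ :=
  Matrix.diagonal ![Complex.exp (ν * Complex.I), Complex.exp (-ν * Complex.I)]

theorem commute_mul_star_of_mul_mul_eq {R : Type*} [Monoid R] [StarMul R] {U V D : R}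
    (hU : U ∈ unitary R) (hV : V ∈ unitary R) (h : U * D * V = D) :
    Commute U (D * star D) := by
  have hUD : star U * D = D * V := by
    conv_lhs => rw [← h]
    rw [← mul_assoc, ← mul_assoc, Unitary.star_mul_self_of_mem hU, one_mul]
  rw [commute_unitary_iff_star_left_conjugate hU]
  calc star U * (D * star D) * U = star U * D * star (star U * D) := by
        simp only [star_mul, star_star, mul_assoc]
    _ = D * star D := by
        rw [hUD, star_mul, mul_assoc, ← mul_assoc V, Unitary.mul_star_self_of_mem hV, one_mul]

theorem eq_star_of_mul_mul_eq {R : Type*} [Monoid R] [StarMul R] {U V D : R}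
    (hU : U ∈ unitary R) (hD : IsUnit D) (hUD : Commute U D) (h : U * D * V = D) :
    V = star U := by
  have hUV : U * V = 1 := hD.mul_left_cancel <| by rw [mul_one, ← mul_assoc, ← hUD.eq, h]
  calc V = star U * U * V := by rw [Unitary.star_mul_self_of_mem hU, one_mul]
    _ = star U := by rw [mul_assoc, hUV, mul_one]

theorem Complex.exp_mul_I_mem_unitary (θ : ℝ) : Complex.exp (θ * Complex.I) ∈ unitary ℂ := by
  rw [Unitary.mem_iff_star_mul_self, Complex.star_def, ← Complex.exp_conj, ← Complex.exp_add]
  simp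

theorem Complex.exists_int_eq_mul_pi_of_exp_mul_I_sq_eq_one {θ : ℝ}
    (h : Complex.exp (θ * Complex.I) ^ 2 = 1) : ∃ n : ℤ, θ = n * Real.pi := by
  rw [sq, ← Complex.exp_add] at h
  obtain ⟨n, hn⟩ := Complex.exp_eq_one_iff.1 h
  refine ⟨n, ?_⟩
  have h2I : (θ - n * Real.pi : ℂ) * (2 * Complex.I) = 0 := by linear_combination hn
  exact_mod_cast sub_eq_zero.1 <| (mul_eq_zero.1 h2I).resolve_right (by simp)

namespace Matrix

variable {n : Type*} [Fintype n] [DecidableEq n]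

theorem isDiag_of_commute_diagonal {α : Type*} [CommRing α] [NoZeroDivisors α] {d : n → α}
    (hd : Function.Injective d) {M : Matrix n n α} (h : Commute M (diagonal d)) : M.IsDiag := by
  intro i j hij
  have hMij := congrFun (congrFun h.eq i) j
  rw [mul_diagonal, diagonal_mul] at hMij
  have : M i j * (d j - d i) = 0 := by linear_combination hMij
  exact (mul_eq_zero.1 this).resolve_right (sub_ne_zero.2 (hd.ne hij).symm)

theorem diagonal_mem_unitaryGroup_iff {α : Type*} [CommRing α] [StarRing α] {d : n → α} :
    diagonal d ∈ unitaryGroup n α ↔ ∀ i, d i ∈ unitary α := by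
  simp only [unitaryGroup, Unitary.mem_iff, star_eq_conjTranspose, diagonal_conjTranspose,
    diagonal_mul_diagonal, ← diagonal_one, diagonal_eq_diagonal_iff, Pi.star_apply, forall_and]

theorem pow_card_eq_one_of_smul_mul_mul_eq {K : Type*} [CommRing K] [IsDomain K]
    {c : K} {D X Y : Matrix n n K} (hD : D.det ≠ 0) (hX : X.det = 1) (hY : Y.det = 1)
    (h : c • X * D * Y = D) : c ^ Fintype.card n = 1 := by
  have hdet := congrArg det h
  rw [det_mul, det_mul, det_smul, hX, hY, mul_one, mul_one] at hdet
  exact mul_right_cancel₀ hD (hdet.trans (one_mul _).symm)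

theorem isDiag_of_commute_diagonal_mul_star {p q : ℝ} (hp : 0 < p) (hq : 0 < q) (hpq : p ≠ q)
    {U : Matrix (Fin 2) (Fin 2) ℂ}
    (h : Commute U (diagonal ![(p : ℂ), (q : ℂ)] * star (diagonal ![(p : ℂ), (q : ℂ)]))) :
    U.IsDiag := by
  have hDD : diagonal ![(p : ℂ), (q : ℂ)] * star (diagonal ![(p : ℂ), (q : ℂ)]) =
      diagonal ![(p : ℂ) ^ 2, (q : ℂ) ^ 2] := by
    rw [star_eq_conjTranspose, diagonal_conjTranspose, diagonal_mul_diagonal]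
    congr 1
    ext i
    fin_cases i <;> simp [sq]
  have hsq : (p : ℂ) ^ 2 ≠ (q : ℂ) ^ 2 := by
    exact_mod_cast (pow_left_inj₀ hp.le hq.le two_ne_zero).not.2 hpq
  exact isDiag_of_commute_diagonal (by simpa using hsq) (hDD ▸ h)

end Matrix

theorem diagExpSigma3_mem_unitaryGroup (ν : ℝ) : diagExpSigma3 ν ∈ unitaryGroup (Fin 2) ℂ := by
  rw [diagExpSigma3, diagonal_mem_unitaryGroup_iff, Fin.forall_fin_two]
  exact ⟨Complex.exp_mul_I_mem_unitary ν, by simpa using Complex.exp_mul_I_mem_unitary (-ν)⟩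

theorem exists_eq_diagExpSigma3 {U : Matrix (Fin 2) (Fin 2) ℂ}
    (hU : U ∈ specialUnitaryGroup (Fin 2) ℂ) (hdiag : U.IsDiag) :
    ∃ ν : ℝ, U = diagExpSigma3 ν := by
  rw [← hdiag.diagonal_diag] at hU ⊢
  obtain ⟨hunit, hdet⟩ := mem_specialUnitaryGroup_iff.1 hU
  obtain ⟨ν, hν⟩ := (Complex.norm_eq_one_iff _).1 <|
    CStarRing.norm_of_mem_unitary (diagonal_mem_unitaryGroup_iff.1 hunit 0)
  rw [det_diagonal, Fin.prod_univ_two, ← hν] at hdet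
  refine ⟨ν, congrArg diagonal (funext <| Fin.forall_fin_two.2 ⟨?_, ?_⟩)⟩
  · simpa using hν.symm
  · simpa [Complex.exp_neg] using eq_inv_of_mul_eq_one_right hdet

theorem stmt_5_general (p q : ℝ) (hp : 0 < p) (hq : 0 < q) (hpq : p ≠ q)
    (φ : ℝ) (X Y : Matrix (Fin 2) (Fin 2) ℂ)
    (hX : X ∈ Matrix.specialUnitaryGroup (Fin 2) ℂ)
    (hY : Y ∈ Matrix.specialUnitaryGroup (Fin 2) ℂ) :
    (Matrix.diagonal ![(p : ℂ), (q : ℂ)] =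
        Complex.exp (φ * Complex.I) •
          (X * Matrix.diagonal ![(p : ℂ), (q : ℂ)] * Yᵀ)) ↔
      ∃ (n : ℤ) (ν : ℝ), φ = n * Real.pi ∧
        Complex.exp (φ * Complex.I) • X = diagExpSigma3 ν ∧
        Y = (diagExpSigma3 ν).map (starRingEnd ℂ) := by
  obtain ⟨hXu, hXdet⟩ := mem_specialUnitaryGroup_iff.1 hX
  obtain ⟨hYu, hYdet⟩ := mem_specialUnitaryGroup_iff.1 hY
  set D := diagonal ![(p : ℂ), (q : ℂ)]
  set c := Complex.exp (φ * Complex.I)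
  have hD : IsUnit D := by
    simp [D, isUnit_diagonal, Pi.isUnit_iff, Fin.forall_fin_two, hp.ne', hq.ne']
  constructor
  · intro h
    have hUD : c • X * D * Yᵀ = D := by rw [smul_mul_assoc, smul_mul_assoc, ← h]
    have hc2 : c ^ 2 = 1 := by
      simpa using pow_card_eq_one_of_smul_mul_mul_eq ((isUnit_iff_isUnit_det D).1 hD).ne_zero
        hXdet (by rwa [det_transpose]) hUD
    have hU : c • X ∈ unitaryGroup (Fin 2) ℂ :=
      Unitary.smul_mem_of_mem (Complex.exp_mul_I_mem_unitary φ) hXu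
    have hUdet : (c • X).det = 1 := by rw [det_smul, Fintype.card_fin, hc2, hXdet, one_mul]
    obtain ⟨ν, hν⟩ := exists_eq_diagExpSigma3 (mem_specialUnitaryGroup_iff.2 ⟨hU, hUdet⟩) <|
      isDiag_of_commute_diagonal_mul_star hp hq hpq <|
        commute_mul_star_of_mul_mul_eq hU (transpose_mem_unitaryGroup_iff.2 hYu) hUD
    obtain ⟨n, hn⟩ := Complex.exists_int_eq_mul_pi_of_exp_mul_I_sq_eq_one hc2
    refine ⟨n, ν, hn, hν, ?_⟩
    have hYT := eq_star_of_mul_mul_eq hU hD (hν ▸ commute_diagonal _ _) hUD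
    rw [← transpose_transpose Y, hYT, hν]
    rfl
  · rintro ⟨-, ν, -, hXν, rfl⟩
    have hstar : ((diagExpSigma3 ν).map (starRingEnd ℂ))ᵀ = star (diagExpSigma3 ν) := rfl
    rw [← smul_mul_assoc, ← smul_mul_assoc, hXν, hstar, diagExpSigma3,
      (commute_diagonal _ _).eq, mul_assoc, ← diagExpSigma3,
      Unitary.mul_star_self_of_mem (diagExpSigma3_mem_unitaryGroup ν), mul_one]

/-- For 0 < p ≠ q > 0 with p² + q² = 1, the stabiliser equation
`diag(p,q) = e^{iφ} X diag(p,q) Yᵀ` for `X, Y ∈ SU(2)` holds iff `φ` is an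
integer multiple of π, `X` is (up to the sign `e^{iφ} = ±1`) a diagonal matrix
`e^{iνσ₃}`, and `Y` is its entrywise complex conjugate. -/
theorem stmt_5 (p q : ℝ) (hp : 0 < p) (hq : 0 < q) (hpq : p ≠ q)
    (hnorm : p ^ 2 + q ^ 2 = 1)
    (φ : ℝ) (X Y : Matrix (Fin 2) (Fin 2) ℂ)
    (hX : X ∈ Matrix.specialUnitaryGroup (Fin 2) ℂ)
    (hY : Y ∈ Matrix.specialUnitaryGroup (Fin 2) ℂ) :
    (Matrix.diagonal ![(p : ℂ), (q : ℂ)] =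
        Complex.exp (φ * Complex.I) •
          (X * Matrix.diagonal ![(p : ℂ), (q : ℂ)] * Yᵀ)) ↔
      ∃ (n : ℤ) (ν : ℝ), φ = n * Real.pi ∧
        Complex.exp (φ * Complex.I) • X = diagExpSigma3 ν ∧
        Y = (diagExpSigma3 ν).map (starRingEnd ℂ) :=
  stmt_5_general p q hp hq hpq φ X Y hX hY
end

section
/- Let φ, θ, α, β be real numbers satisfying φ + θ + α + β ∈ {0, 2π} and α + β ≡ α - β ≡ -α + β ≡ -(α + β) ≡ θ - φ (mod 2π). Then each of φ, θ, α, β is congruent to 0 or π modulo 2π. -/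
/-- Congruence modulo 2π. -/
def Mod2Pi (x y : ℝ) : Prop := ∃ k : ℤ, x - y = k * (2 * Real.pi)

theorem stmt_8 (φ θ α β : ℝ)
    (hsum : φ + θ + α + β = 0 ∨ φ + θ + α + β = 2 * Real.pi)
    (h1 : Mod2Pi (α + β) (α - β))
    (h2 : Mod2Pi (α - β) (-α + β))
    (h3 : Mod2Pi (-α + β) (-(α + β)))
    (h4 : Mod2Pi (-(α + β)) (θ - φ)) :
    (∃ n : ℤ, φ = n * Real.pi) ∧ (∃ n : ℤ, θ = n * Real.pi) ∧
    (∃ n : ℤ, α = n * Real.pi) ∧ (∃ n : ℤ, β = n * Real.pi) := by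
  obtain ⟨k1, hk1⟩ := h1
  obtain ⟨k2, hk2⟩ := h2
  obtain ⟨k4, hk4⟩ := h4
  rcases hsum with hs | hs
  · refine ⟨⟨k4, ?_⟩, ⟨-(2*k1 + k2) - k4, ?_⟩, ⟨k1 + k2, ?_⟩, ⟨k1, ?_⟩⟩
    · push_cast; linear_combination hs / 2 + hk4 / 2
    · push_cast; linear_combination hs / 2 - hk4 / 2 - hk1 - hk2 / 2
    · push_cast; linear_combination hk1 / 2 + hk2 / 2
    · push_cast; linear_combination hk1 / 2
  · refine ⟨⟨k4 + 1, ?_⟩, ⟨1 - (2*k1 + k2) - k4, ?_⟩, ⟨k1 + k2, ?_⟩, ⟨k1, ?_⟩⟩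
    · push_cast; linear_combination hs / 2 + hk4 / 2
    · push_cast; linear_combination hs / 2 - hk4 / 2 - hk1 - hk2 / 2
    · push_cast; linear_combination hk1 / 2 + hk2 / 2
    · push_cast; linear_combination hk1 / 2
end

section
/- For every real θ and signs ε₁, ε₂ ∈ {±1}, the element (ε₁, e^{iθσ₃}, ε₂e^{-iθσ₃}, ε₁ε₂·1) of U(1)×SU(2)³ stabilizes the slice state |Ψ⟩ = p|↑↑↑⟩ + bc|↓↓↑⟩ + bd|↓↓↓⟩ for any p, b, c, d ∈ ℂ. -/
open Matrix

/-- The action of (U,V,W) on the coefficients of a 3-qubit state. -/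
noncomputable def locAct (U V W : Matrix (Fin 2) (Fin 2) ℂ)
    (ψ : Fin 2 → Fin 2 → Fin 2 → ℂ) : Fin 2 → Fin 2 → Fin 2 → ℂ :=
  fun i j k => ∑ i' : Fin 2, ∑ j' : Fin 2, ∑ k' : Fin 2,
    U i i' * V j j' * W k k' * ψ i' j' k'

/-- diag(e^{iθ}, e^{-iθ}) = e^{iθσ₃}. -/
noncomputable def expSigma3 (θ : ℝ) : Matrix (Fin 2) (Fin 2) ℂ :=
  Matrix.diagonal ![Complex.exp (θ * Complex.I), Complex.exp (-θ * Complex.I)]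

/-- Coefficients of the slice state p|↑↑↑⟩ + bc|↓↓↑⟩ + bd|↓↓↓⟩ (↑ = 0, ↓ = 1). -/
def sliceCoef (p b c d : ℂ) : Fin 2 → Fin 2 → Fin 2 → ℂ :=
  fun i j k => if i = 0 ∧ j = 0 ∧ k = 0 then p
    else if i = 1 ∧ j = 1 ∧ k = 0 then b * c
    else if i = 1 ∧ j = 1 ∧ k = 1 then b * d else 0

set_option maxHeartbeats 1000000 in
theorem stmt_17 (θ : ℝ) (ε₁ ε₂ : ℝ) (hε₁ : ε₁ = 1 ∨ ε₁ = -1)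
    (hε₂ : ε₂ = 1 ∨ ε₂ = -1) (p b c d : ℂ) :
    (ε₁ : ℂ) •
        locAct (expSigma3 θ) ((ε₂ : ℂ) • expSigma3 (-θ))
          (((ε₁ * ε₂ : ℝ) : ℂ) • (1 : Matrix (Fin 2) (Fin 2) ℂ))
          (sliceCoef p b c d) =
      sliceCoef p b c d := by
  funext i j k
  fin_cases i <;> fin_cases j <;> fin_cases k <;>
    rcases hε₁ with rfl | rfl <;> rcases hε₂ with rfl | rfl <;>
    simp [locAct, expSigma3, sliceCoef, Fin.sum_univ_two, Matrix.one_apply,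
      Matrix.diagonal, Pi.smul_apply, smul_eq_mul, neg_mul, ← Complex.exp_add,
      Complex.exp_zero, mul_comm]
end
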